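/- arXiv:1807.02238 — 4 statements merged into one kernel-verified Lean document; each statement's English description precedes it below -/
import Mathlib

section
/- Let Q : Ω₁ × ⋯ × Ω_d → ℂ be a function holomorphic in each coordinate separately, where Ω₁,…,Ω_d ⊆ ℂ are open connected sets, and assume all its partial derivatives coincide: D₁Q = D₂Q = ⋯ = D_dQ on the product domain. Then Q(x₁,…,x_d) = Q(x₁',…,x_d') whenever x₁+⋯+x_d = x₁'+⋯+x_d' (and both tuples lie in the domain with equal sums attainable by a connected path argument). In particular, Q factors through the sum of its coordinates. -/
/-!
Two coordinates at a time: let `F a b` be holomorphic in each variable with `∂₁F = ∂₂F`.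
By the Baire category theorem `∂₁F` is bounded on some small bidisc, hence jointly continuous
there by the Cauchy estimates, so `F` is jointly differentiable and `s ↦ F (a + s) (b - s)` is
locally constant. The identity theorem, applied in each variable and then in the shift `t`,
spreads `F (a + t) b = F a (b + t)` over the whole convex domain.

In `d` variables `Q` is thus invariant under moving an amount from one coordinate to another.
Near any point, a small perturbation preserving the sum is a composite of such moves through a
fixed pivot coordinate, so `Q` is locally constant on the convex slice `{x | ∑ i, x i = c}` of the
domain, hence constant on it.
-/

open Metric Set Filter Topology Function

theorem exists_isOpen_forall_norm_le_of_continuousOn {X Y E : Type*} [TopologicalSpace X]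
    [TopologicalSpace Y] [BaireSpace Y] [NormedAddCommGroup E] {K : Set X} (hK : IsCompact K)
    {W : Set Y} (hW : IsOpen W) (hWne : W.Nonempty) {G : X → Y → E}
    (h₁ : ∀ w ∈ W, ContinuousOn (G · w) K) (h₂ : ∀ z ∈ K, ContinuousOn (G z) W) :
    ∃ W' ⊆ W, IsOpen W' ∧ W'.Nonempty ∧ ∃ C, ∀ z ∈ K, ∀ w ∈ W', ‖G z w‖ ≤ C := by
  have := hW.baireSpace
  have := hWne.to_subtype
  let S : ℕ → Set W := fun n => {w | ∀ z ∈ K, ‖G z w‖ ≤ n}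
  have hS : ∀ n, IsClosed (S n) := fun n => by
    simp only [S, ofPred_forall]
    exact isClosed_biInter fun z hz => isClosed_le (h₂ z hz).domRestrict.norm continuous_const
  have hcover : ⋃ n, S n = univ := eq_univ_of_forall fun w => by
    obtain ⟨C, hC⟩ := hK.exists_bound_of_continuousOn (h₁ w w.2)
    exact mem_iUnion.2 ⟨⌈C⌉₊, fun z hz => (hC z hz).trans (Nat.le_ceil C)⟩
  obtain ⟨n, hn⟩ := nonempty_interior_of_iUnion_of_closed hS hcover
  refine ⟨(↑) '' interior (S n), Subtype.coe_image_subset _ _,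
    hW.isOpenMap_subtype_val _ isOpen_interior, hn.image _, n, ?_⟩
  rintro z hz _ ⟨w, hw, rfl⟩
  exact interior_subset hw z hz

section Holomorphic

variable {E : Type*} [NormedAddCommGroup E] [NormedSpace ℂ E]

theorem lipschitzOnWith_ball_half_of_norm_le {f : ℂ → E} {c : ℂ} {R M : ℝ} (hR : 0 < R)
    (hf : DifferentiableOn ℂ f (ball c R)) (hM : ∀ z ∈ ball c R, ‖f z‖ ≤ M) :
    LipschitzOnWith (4 * M / R).toNNReal f (ball c (R / 2)) := by
  refine (convex_ball c (R / 2)).lipschitzOnWith_of_nnnorm_deriv_le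
    (fun z hz => hf.differentiableAt (isOpen_ball.mem_nhds
      (ball_subset_ball (by linarith) hz))) fun z hz => ?_
  have hsub : ball z (R / 2) ⊆ ball c R := ball_subset_ball' (by linarith [mem_ball.1 hz])
  have hmaps : MapsTo f (ball z (R / 2)) (closedBall (f z) (2 * M)) := fun w hw => by
    rw [mem_closedBall, dist_eq_norm]
    linarith [norm_sub_le (f w) (f z), hM w (hsub hw), hM z (hsub (mem_ball_self (by linarith)))]
  have hderiv := Complex.norm_deriv_le_div_of_mapsTo_ball (hf.mono hsub) hmaps (by linarith)
  rw [← norm_toNNReal]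
  exact Real.toNNReal_le_toNNReal (hderiv.trans_eq (by field_simp; ring))

theorem continuousOn_uncurry_of_norm_le {Y : Type*} [TopologicalSpace Y] {G : ℂ → Y → E}
    {W : Set Y} {c : ℂ} {R M : ℝ} (hR : 0 < R)
    (h₁ : ∀ w ∈ W, DifferentiableOn ℂ (G · w) (ball c R))
    (h₂ : ∀ z ∈ ball c (R / 2), ContinuousOn (G z) W)
    (hM : ∀ z ∈ ball c R, ∀ w ∈ W, ‖G z w‖ ≤ M) :
    ContinuousOn (uncurry G) (ball c (R / 2) ×ˢ W) :=
  continuousOn_prod_of_continuousOn_lipschitzOnWith _ _ h₂ fun w hw =>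
    lipschitzOnWith_ball_half_of_norm_le hR (h₁ w hw) fun z hz => hM z hz w hw

theorem exists_ball_prod_continuousOn_uncurry {U V : Set ℂ} (hU : IsOpen U) (hV : IsOpen V)
    (hUne : U.Nonempty) (hVne : V.Nonempty) {G : ℂ → ℂ → E}
    (h₁ : ∀ b ∈ V, DifferentiableOn ℂ (G · b) U) (h₂ : ∀ a ∈ U, ContinuousOn (G a) V) :
    ∃ α β ρ, 0 < ρ ∧ ball α ρ ⊆ U ∧ ball β ρ ⊆ V ∧
      ContinuousOn (uncurry G) (ball α ρ ×ˢ ball β ρ) := by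
  obtain ⟨α, hα⟩ := hUne
  obtain ⟨r, hr, hrU⟩ := nhds_basis_closedBall.mem_iff.1 (hU.mem_nhds hα)
  obtain ⟨W, hWV, hWo, ⟨β, hβ⟩, C, hC⟩ := exists_isOpen_forall_norm_le_of_continuousOn
    (isCompact_closedBall α r) hV hVne (fun b hb => (h₁ b hb).continuousOn.mono hrU)
    fun a ha => h₂ a (hrU ha)
  obtain ⟨s, hs, hsW⟩ := Metric.isOpen_iff.1 hWo β hβ
  have hcont : ContinuousOn (uncurry G) (ball α (r / 2) ×ˢ ball β s) :=
    continuousOn_uncurry_of_norm_le hr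
      (fun b hb => (h₁ b (hWV (hsW hb))).mono (ball_subset_closedBall.trans hrU))
      (fun a ha => (h₂ a (hrU (ball_subset_closedBall (ball_subset_ball (by linarith) ha)))).mono
        (hsW.trans hWV))
      fun a ha b hb => hC a (ball_subset_closedBall ha) b (hsW hb)
  refine ⟨α, β, min (r / 2) s, by positivity,
    (ball_subset_ball ((min_le_left _ _).trans (by linarith))).trans
      (ball_subset_closedBall.trans hrU),
    (ball_subset_ball (min_le_right _ _)).trans (hsW.trans hWV),
    hcont.mono (prod_mono (ball_subset_ball (min_le_left _ _))
      (ball_subset_ball (min_le_right _ _)))⟩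

theorem uncurry_eqOn_zero_of_preconnected_of_eventuallyEq_zero [CompleteSpace E]
    {U V : Set ℂ} (hU : IsOpen U) (hV : IsOpen V) (hU' : IsPreconnected U)
    (hV' : IsPreconnected V) {H : ℂ → ℂ → E} (h₁ : ∀ b ∈ V, DifferentiableOn ℂ (H · b) U)
    (h₂ : ∀ a ∈ U, DifferentiableOn ℂ (H a) V) {a₀ b₀ : ℂ} (ha₀ : a₀ ∈ U) (hb₀ : b₀ ∈ V)
    (h₀ : uncurry H =ᶠ[𝓝 (a₀, b₀)] 0) : EqOn (uncurry H) 0 (U ×ˢ V) := by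
  rw [nhds_prod_eq] at h₀
  obtain ⟨pa, hpa, pb, hpb, hp⟩ := eventually_prod_iff.1 h₀
  have hnear : ∀ᶠ b in 𝓝 b₀, ∀ a ∈ U, H a b = 0 := by
    filter_upwards [hpb, hV.mem_nhds hb₀] with b hb hbV a ha
    exact ((h₁ b hbV).analyticOnNhd hU).eqOn_zero_of_preconnected_of_eventuallyEq_zero hU' ha₀
      (hpa.mono fun a' ha' => hp ha' hb) ha
  rintro ⟨a, b⟩ ⟨ha, hb⟩
  exact ((h₂ a ha).analyticOnNhd hV).eqOn_zero_of_preconnected_of_eventuallyEq_zero hV' hb₀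
    (hnear.mono fun b' hb' => hb' a ha) hb

end Holomorphic

theorem apply_add_eq_apply_add_of_continuousOn_deriv {U V : Set ℂ} (hU : IsOpen U)
    (hV : IsOpen V) (hUc : Convex ℝ U) (hVc : Convex ℝ V) {F : ℂ → ℂ → ℂ}
    (hF₁ : ∀ b ∈ V, DifferentiableOn ℂ (F · b) U) (hF₂ : ∀ a ∈ U, DifferentiableOn ℂ (F a) V)
    (hF : ∀ a ∈ U, ∀ b ∈ V, deriv (F · b) a = deriv (F a) b)
    (hG : ContinuousOn (uncurry fun a b => deriv (F · b) a) (U ×ˢ V)) {a b t : ℂ}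
    (ha : a ∈ U) (hat : a + t ∈ U) (hb : b ∈ V) (hbt : b + t ∈ V) :
    F (a + t) b = F a (b + t) := by
  set G := fun a b => deriv (F · b) a
  let L : ℂ → ℂ → ℂ →L[ℂ] ℂ := fun a b => ContinuousLinearMap.toSpanSingleton ℂ (G a b)
  -- A jointly continuous partial derivative makes `F` jointly differentiable.
  have hFdiff : ∀ u ∈ U ×ˢ V, HasFDerivAt (uncurry F) ((↿L u).coprod (↿L u)) u := by
    intro u hu
    have hnhds : U ×ˢ V ∈ 𝓝 u := (hU.prod hV).mem_nhds hu
    have hL : ContinuousAt ↿L u :=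
      (ContinuousLinearMap.toSpanSingletonLIE ℂ ℂ).continuous.continuousAt.comp
        (hG.continuousAt hnhds)
    refine (hasStrictFDerivAt_uncurry_coprod ?_ ?_ hL hL).hasFDerivAt
    · filter_upwards [hnhds] with v hv
      exact ((hF₁ _ hv.2).differentiableAt (hU.mem_nhds hv.1)).hasDerivAt.hasFDerivAt
    · filter_upwards [hnhds] with v hv
      have := ((hF₂ _ hv.1).differentiableAt (hV.mem_nhds hv.2)).hasDerivAt.hasFDerivAt
      rwa [← hF _ hv.1 _ hv.2] at this
  set S := (a + ·) ⁻¹' U ∩ -((b + t + ·) ⁻¹' V)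
  have hS : IsOpen S := (hU.preimage (by fun_prop)).inter (hV.preimage (by fun_prop)).neg
  have hSc : Convex ℝ S := (hUc.translate_preimage_right a).inter
    (hVc.translate_preimage_right (b + t)).neg
  have hψ : ∀ s ∈ S, HasDerivAt (fun s => F (a + s) (b + t + -s)) 0 s := by
    intro s hs
    have hline : HasDerivAt (fun s : ℂ => (a + s, b + t + -s)) ((1 : ℂ), (-1 : ℂ)) s :=
      ((hasDerivAt_id s).const_add a).prodMk ((hasDerivAt_id s).neg.const_add (b + t))
    simpa [L, Function.comp_def] using (hFdiff _ hs).comp_hasDerivAt s hline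
  have := hS.is_const_of_deriv_eq_zero hSc.isPreconnected
    (fun s hs => (hψ s hs).differentiableAt.differentiableWithinAt) (fun s hs => (hψ s hs).deriv)
    (x := 0) (y := t) (by simpa [S] using ⟨ha, hbt⟩) (by simpa [S] using ⟨hat, hb⟩)
  simpa using this.symm

theorem apply_add_eq_apply_add_of_eventually {U V : Set ℂ} (hU : IsOpen U) (hV : IsOpen V)
    (hUc : Convex ℝ U) (hVc : Convex ℝ V) {F : ℂ → ℂ → ℂ}
    (hF₁ : ∀ b ∈ V, DifferentiableOn ℂ (F · b) U) (hF₂ : ∀ a ∈ U, DifferentiableOn ℂ (F a) V)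
    {t α β : ℂ} (hα : α ∈ U) (hαt : α + t ∈ U) (hβ : β ∈ V) (hβt : β + t ∈ V)
    (h : ∀ᶠ p in 𝓝 (α, β), F (p.1 + t) p.2 = F p.1 (p.2 + t)) {a b : ℂ}
    (ha : a ∈ U) (hat : a + t ∈ U) (hb : b ∈ V) (hbt : b + t ∈ V) :
    F (a + t) b = F a (b + t) := by
  have key := uncurry_eqOn_zero_of_preconnected_of_eventuallyEq_zero
    (H := fun a b => F (a + t) b - F a (b + t))
    (hU.inter (hU.preimage (by fun_prop))) (hV.inter (hV.preimage (by fun_prop)))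
    (hUc.inter (hUc.translate_preimage_left t)).isPreconnected
    (hVc.inter (hVc.translate_preimage_left t)).isPreconnected
    (fun b hb => ((hF₁ b hb.1).comp (by fun_prop) fun a ha => ha.2).sub
      ((hF₁ (b + t) hb.2).mono inter_subset_left))
    (fun a ha => ((hF₂ (a + t) ha.2).mono inter_subset_left).sub
      ((hF₂ a ha.1).comp (by fun_prop) fun b hb => hb.2))
    ⟨hα, hαt⟩ ⟨hβ, hβt⟩ (h.mono fun p hp => sub_eq_zero.2 hp)
  exact sub_eq_zero.1 (key (show (a, b) ∈ _ from ⟨⟨ha, hat⟩, hb, hbt⟩))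

theorem apply_add_eq_apply_add_of_forall_norm_lt {U V : Set ℂ} (hU : IsOpen U) (hV : IsOpen V)
    (hUc : Convex ℝ U) (hVc : Convex ℝ V) {F : ℂ → ℂ → ℂ}
    (hF₁ : ∀ b ∈ V, DifferentiableOn ℂ (F · b) U) (hF₂ : ∀ a ∈ U, DifferentiableOn ℂ (F a) V)
    {r : ℝ} (hr : 0 < r) (h : ∀ s, ‖s‖ < r → ∀ a ∈ U, a + s ∈ U → ∀ b ∈ V, b + s ∈ V →
      F (a + s) b = F a (b + s))
    {a b t : ℂ} (ha : a ∈ U) (hat : a + t ∈ U) (hb : b ∈ V) (hbt : b + t ∈ V) :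
    F (a + t) b = F a (b + t) := by
  set T := (a + ·) ⁻¹' U ∩ (b + ·) ⁻¹' V
  have hT : IsOpen T := (hU.preimage (by fun_prop)).inter (hV.preimage (by fun_prop))
  have hH : DifferentiableOn ℂ (fun s => F (a + s) b - F a (b + s)) T :=
    ((hF₁ b hb).comp (by fun_prop) fun s hs => hs.1).sub
      ((hF₂ a ha).comp (by fun_prop) fun s hs => hs.2)
  have h0 : (0 : ℂ) ∈ T := by simpa [T] using ⟨ha, hb⟩
  have := (hH.analyticOnNhd hT).eqOn_zero_of_preconnected_of_eventuallyEq_zero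
    ((hUc.translate_preimage_right a).inter (hVc.translate_preimage_right b)).isPreconnected h0
    ?_ (show t ∈ T from ⟨hat, hbt⟩)
  · exact sub_eq_zero.1 this
  · filter_upwards [ball_mem_nhds (0 : ℂ) hr, hT.mem_nhds h0] with s hs hsT
    exact sub_eq_zero.2 (h s (by simpa using hs) a ha hsT.1 b hb hsT.2)

theorem apply_add_eq_apply_add_of_deriv_eq {U V : Set ℂ} (hU : IsOpen U) (hV : IsOpen V)
    (hUc : Convex ℝ U) (hVc : Convex ℝ V) {F : ℂ → ℂ → ℂ}
    (hF₁ : ∀ b ∈ V, DifferentiableOn ℂ (F · b) U) (hF₂ : ∀ a ∈ U, DifferentiableOn ℂ (F a) V)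
    (hF : ∀ a ∈ U, ∀ b ∈ V, deriv (F · b) a = deriv (F a) b) {a b t : ℂ}
    (ha : a ∈ U) (hat : a + t ∈ U) (hb : b ∈ V) (hbt : b + t ∈ V) :
    F (a + t) b = F a (b + t) := by
  have hG₁ : ∀ b ∈ V, DifferentiableOn ℂ (fun a => deriv (F · b) a) U := fun b hb =>
    ((hF₁ b hb).analyticOnNhd hU).deriv.differentiableOn
  have hG₂ : ∀ a ∈ U, ContinuousOn (fun b => deriv (F · b) a) V := fun a ha =>
    ((hF₂ a ha).analyticOnNhd hV).deriv.continuousOn.congr fun b hb => hF a ha b hb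
  obtain ⟨α, β, ρ, hρ, hαU, hβV, hG⟩ :=
    exists_ball_prod_continuousOn_uncurry hU hV ⟨a, ha⟩ ⟨b, hb⟩ hG₁ hG₂
  refine apply_add_eq_apply_add_of_forall_norm_lt hU hV hUc hVc hF₁ hF₂ (half_pos hρ)
    (fun s hs a' ha' has' b' hb' hbs' => ?_) ha hat hb hbt
  have hball : ∀ c z, z ∈ ball c (ρ / 2) → z ∈ ball c ρ ∧ z + s ∈ ball c ρ := fun c z hz =>
    ⟨ball_subset_ball (by linarith) hz, by
      rw [mem_ball_iff_norm, add_sub_right_comm]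
      linarith [norm_add_le (z - c) s, mem_ball_iff_norm.1 hz]⟩
  refine apply_add_eq_apply_add_of_eventually hU hV hUc hVc hF₁ hF₂
    (hαU (hball α α (mem_ball_self (by linarith))).1)
    (hαU (hball α α (mem_ball_self (by linarith))).2)
    (hβV (hball β β (mem_ball_self (by linarith))).1)
    (hβV (hball β β (mem_ball_self (by linarith))).2) ?_ ha' has' hb' hbs'
  filter_upwards [prod_mem_nhds (ball_mem_nhds α (half_pos hρ)) (ball_mem_nhds β (half_pos hρ))]
    with p hp
  exact apply_add_eq_apply_add_of_continuousOn_deriv isOpen_ball isOpen_ball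
    (convex_ball _ _) (convex_ball _ _) (fun b hb => (hF₁ b (hβV hb)).mono hαU)
    (fun a ha => (hF₂ a (hαU ha)).mono hβV) (fun a ha b hb => hF a (hαU ha) b (hβV hb)) hG
    (hball _ _ hp.1).1 (hball _ _ hp.1).2 (hball _ _ hp.2).1 (hball _ _ hp.2).2

theorem eventually_apply_eq_of_forall_transfer {ι E α : Type*} [Fintype ι] [DecidableEq ι]
    [Nonempty ι] [NormedAddCommGroup E] {P : Set (ι → E)} (hP : IsOpen P) {Q : (ι → E) → α}
    (hQ : ∀ p ∈ P, ∀ i j t, p + Pi.single j t - Pi.single i t ∈ P →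
      Q (p + Pi.single j t - Pi.single i t) = Q p)
    {y : ι → E} (hy : y ∈ P) : ∀ᶠ y' in 𝓝 y, ∑ i, y' i = ∑ i, y i → Q y' = Q y := by
  obtain ⟨i₀⟩ := ‹Nonempty ι›
  obtain ⟨ε, hε, hεP⟩ := Metric.isOpen_iff.1 hP y hy
  have hn : (0 : ℝ) < Fintype.card ι := by exact_mod_cast Fintype.card_pos
  filter_upwards [ball_mem_nhds y (by positivity : 0 < ε / (2 * Fintype.card ι))]
    with y' hy' hsum
  obtain ⟨δ, rfl⟩ : ∃ δ, y' = y + δ := ⟨y' - y, by abel⟩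
  have hδ : 2 * Fintype.card ι * ‖δ‖ < ε := by
    rwa [mem_ball_iff_norm, add_sub_cancel_left, lt_div_iff₀ (by positivity), mul_comm] at hy'
  -- Transfer `δ j` from the coordinate `i₀` to the coordinate `j`, one `j ∈ s` at a time.
  let w : ι → ι → E := fun j => Pi.single j (δ j) - Pi.single i₀ (δ j)
  have hw : ∀ j, ‖w j‖ ≤ 2 * ‖δ‖ := fun j => by
    refine (norm_sub_le _ _).trans ?_
    rw [Pi.norm_single, Pi.norm_single]
    linarith [norm_le_pi_norm δ j]
  have hzP : ∀ s : Finset ι, y + ∑ j ∈ s, w j ∈ P := fun s => hεP <| by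
    rw [mem_ball_iff_norm, add_sub_cancel_left]
    calc ‖∑ j ∈ s, w j‖ ≤ ∑ j ∈ s, ‖w j‖ := norm_sum_le _ _
      _ ≤ ∑ _j : ι, 2 * ‖δ‖ := (Finset.sum_le_sum fun j _ => hw j).trans
        (Finset.sum_le_univ_sum_of_nonneg fun _ => by positivity)
      _ < ε := by rw [Finset.sum_const, Finset.card_univ, nsmul_eq_mul]; linarith
  have hz : ∀ s : Finset ι, Q (y + ∑ j ∈ s, w j) = Q y := by
    intro s
    induction s using Finset.induction_on with
    | empty => simp
    | insert j s hj ih =>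
      have hstep : y + ∑ k ∈ insert j s, w k
          = y + ∑ k ∈ s, w k + Pi.single j (δ j) - Pi.single i₀ (δ j) := by
        simp only [Finset.sum_insert hj, w]
        abel
      rw [hstep, hQ _ (hzP s) _ _ _ (hstep ▸ hzP _), ih]
  have hδsum : ∑ j, δ j = 0 := by simpa [Finset.sum_add_distrib] using hsum
  have hwsum : ∑ j, w j = δ := by
    have hpivot : ∑ j, Pi.single i₀ (δ j) = (Pi.single i₀ (∑ j, δ j) : ι → E) :=
      (map_sum (AddMonoidHom.single (fun _ => E) i₀) δ Finset.univ).symm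
    rw [Finset.sum_sub_distrib, Finset.univ_sum_single, hpivot, hδsum, Pi.single_zero, sub_zero]
  rw [← hz Finset.univ, hwsum]

theorem apply_update_update_add_eq {ι : Type*} [DecidableEq ι] {Ω : ι → Set ℂ}
    (hΩo : ∀ i, IsOpen (Ω i)) (hΩc : ∀ i, Convex ℝ (Ω i)) {Q : (ι → ℂ) → ℂ}
    (hhol : ∀ (i : ι) (x : ι → ℂ), (∀ j, x j ∈ Ω j) →
      DifferentiableAt ℂ (fun z => Q (update x i z)) (x i))
    (hderiv : ∀ (i j : ι) (x : ι → ℂ), (∀ k, x k ∈ Ω k) →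
      deriv (fun z => Q (update x i z)) (x i) = deriv (fun z => Q (update x j z)) (x j))
    {p : ι → ℂ} (hp : ∀ k, p k ∈ Ω k) {i j : ι} (hij : i ≠ j) {a b t : ℂ}
    (ha : a ∈ Ω i) (hat : a + t ∈ Ω i) (hb : b ∈ Ω j) (hbt : b + t ∈ Ω j) :
    Q (update (update p i (a + t)) j b) = Q (update (update p i a) j (b + t)) := by
  set F : ℂ → ℂ → ℂ := fun a b => Q (update (update p i a) j b)
  have hmem : ∀ a ∈ Ω i, ∀ b ∈ Ω j, ∀ k, update (update p i a) j b k ∈ Ω k := by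
    intro a ha b hb k
    rcases eq_or_ne k j with rfl | hkj
    · simpa
    rcases eq_or_ne k i with rfl | hki
    · simpa [hkj]
    simpa [hkj, hki] using hp k
  have hFi : ∀ a b, (fun z => Q (update (update (update p i a) j b) i z)) = (F · b) :=
    fun a b => funext fun z => by rw [update_comm hij.symm, update_idem]
  have hFj : ∀ a b, (fun z => Q (update (update (update p i a) j b) j z)) = F a :=
    fun a b => funext fun z => by rw [update_idem]
  have hxi : ∀ a b, update (update p i a) j b i = a := fun a b => by simp [hij]
  have hxj : ∀ a b, update (update p i a) j b j = b := fun a b => by simp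
  have hF₁ : ∀ b ∈ Ω j, DifferentiableOn ℂ (F · b) (Ω i) := fun b hb a ha => by
    have := hhol i _ (hmem a ha b hb)
    rw [hFi, hxi] at this
    exact this.differentiableWithinAt
  have hF₂ : ∀ a ∈ Ω i, DifferentiableOn ℂ (F a) (Ω j) := fun a ha b hb => by
    have := hhol j _ (hmem a ha b hb)
    rw [hFj, hxj] at this
    exact this.differentiableWithinAt
  have hF : ∀ a ∈ Ω i, ∀ b ∈ Ω j, deriv (F · b) a = deriv (F a) b := fun a ha b hb => by
    have := hderiv i j _ (hmem a ha b hb)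
    rwa [hFi, hFj, hxi, hxj] at this
  exact apply_add_eq_apply_add_of_deriv_eq (hΩo i) (hΩo j) (hΩc i) (hΩc j) hF₁ hF₂ hF
    ha hat hb hbt

theorem apply_add_single_sub_single_eq {ι : Type*} [DecidableEq ι] {Ω : ι → Set ℂ}
    (hΩo : ∀ i, IsOpen (Ω i)) (hΩc : ∀ i, Convex ℝ (Ω i)) {Q : (ι → ℂ) → ℂ}
    (hhol : ∀ (i : ι) (x : ι → ℂ), (∀ j, x j ∈ Ω j) →
      DifferentiableAt ℂ (fun z => Q (update x i z)) (x i))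
    (hderiv : ∀ (i j : ι) (x : ι → ℂ), (∀ k, x k ∈ Ω k) →
      deriv (fun z => Q (update x i z)) (x i) = deriv (fun z => Q (update x j z)) (x j))
    {p : ι → ℂ} (hp : ∀ k, p k ∈ Ω k) (i j : ι) (t : ℂ)
    (hp' : ∀ k, (p + Pi.single j t - Pi.single i t : ι → ℂ) k ∈ Ω k) :
    Q (p + Pi.single j t - Pi.single i t) = Q p := by
  rcases eq_or_ne i j with rfl | hij
  · simp
  have key := apply_update_update_add_eq hΩo hΩc hhol hderiv hp hij
    (a := p i - t) (b := p j) (t := t)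
    (by simpa [hij] using hp' i) (by simpa using hp i) (hp j) (by simpa [hij.symm] using hp' j)
  rw [sub_add_cancel, update_eq_self, update_eq_self] at key
  rw [key]
  congr 1
  ext k
  rcases eq_or_ne k j with rfl | hkj
  · simp [hij.symm]
  rcases eq_or_ne k i with rfl | hki
  · simp [hkj]
  simp [hkj, hki]

/-- If `Q` is holomorphic in each coordinate separately on a product of open convex
sets and all its partial derivatives coincide, then `Q` factors through the sum of
its coordinates. -/
theorem stmt_0 (d : ℕ) (hd : 1 ≤ d) (Ω : Fin d → Set ℂ)
    (hΩo : ∀ i, IsOpen (Ω i)) (hΩc : ∀ i, Convex ℝ (Ω i))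
    (Q : (Fin d → ℂ) → ℂ)
    (hhol : ∀ (i : Fin d) (x : Fin d → ℂ), (∀ j, x j ∈ Ω j) →
      DifferentiableAt ℂ (fun z => Q (Function.update x i z)) (x i))
    (hderiv : ∀ (i j : Fin d) (x : Fin d → ℂ), (∀ k, x k ∈ Ω k) →
      deriv (fun z => Q (Function.update x i z)) (x i)
        = deriv (fun z => Q (Function.update x j z)) (x j))
    (x x' : Fin d → ℂ) (hx : ∀ j, x j ∈ Ω j) (hx' : ∀ j, x' j ∈ Ω j)
    (hsum : ∑ j, x j = ∑ j, x' j) :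
    Q x = Q x' := by
  have : Nonempty (Fin d) := ⟨⟨0, hd⟩⟩
  have hsumLinear : IsLinearMap ℝ fun y : Fin d → ℂ => ∑ j, y j :=
    ⟨fun _ _ => Finset.sum_add_distrib, fun c y => by simp [Finset.smul_sum]⟩
  have hS : IsPreconnected (univ.pi Ω ∩ {y | ∑ j, y j = ∑ j, x j}) :=
    ((convex_pi fun i _ => hΩc i).inter
      ((convex_singleton _).is_linear_preimage hsumLinear)).isPreconnected
  refine hS.induction₂ (fun y y' => Q y = Q y') (fun y hy => ?_) (fun _ _ _ _ _ _ => Eq.trans)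
    (fun _ _ _ _ => Eq.symm) ⟨mem_univ_pi.2 hx, rfl⟩ ⟨mem_univ_pi.2 hx', hsum.symm⟩
  have hlocal := eventually_apply_eq_of_forall_transfer
    (isOpen_set_pi finite_univ fun i _ => hΩo i) (fun p hp i j t hp' =>
      apply_add_single_sub_single_eq hΩo hΩc hhol hderiv (mem_univ_pi.1 hp) i j t
        (mem_univ_pi.1 hp')) hy.1
  filter_upwards [nhdsWithin_le_nhds hlocal, self_mem_nhdsWithin] with y' hy' hy'S
  exact (hy' (hy'S.2.trans hy.2.symm)).symm
end

section
/- Let H̃ be holomorphic on ℂ \ {0}, let R₁,…,R_d be nonconstant complex polynomials (d ≥ 1), and let f ∈ ℂ[x₁,…,x_d] be a polynomial such that f(x₁,…,x_d) = H̃(R₁(x₁)·…·R_d(x_d)) whenever all R_j(x_j) ≠ 0. If R₁ has a zero at some point a*, then H̃ is bounded near 0; consequently H̃ extends to an entire function. -/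
/-!
Every nonconstant complex polynomial is surjective, so we may fix `b j` with `R j (b j) = 1` for
`j ≠ 1`; then `H̃ (R₁ t) = f (t, b₂, …, b_d)` whenever `R₁ t ≠ 0`. A value `w` with `0 < ‖w‖ ≤ 1`
is attained as `R₁ t` with `t` in the compact set `R₁⁻¹(closedBall 0 1)`, on which the polynomial
`t ↦ f (t, b₂, …, b_d)` is bounded. Riemann's removable singularity theorem finishes the proof.
-/

open Filter Function Metric Polynomial Set Topology

theorem Polynomial.exists_bound_of_eq_comp_eval {K E : Type*} [NormedField K] [ProperSpace K]
    [IsAlgClosed K] [SeminormedAddCommGroup E] {p : K[X]} (hp : 0 < p.natDegree) {F H : K → E}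
    (hF : Continuous F) (hFH : ∀ t, p.eval t ≠ 0 → F t = H (p.eval t)) :
    ∃ C, ∀ w, w ≠ 0 → ‖w‖ ≤ 1 → ‖H w‖ ≤ C := by
  have hK : IsCompact (p.eval ⁻¹' closedBall 0 1) :=
    (p.isProperMap_eval (natDegree_pos_iff_degree_pos.1 hp)).isCompact_preimage
      (isCompact_closedBall 0 1)
  obtain ⟨C, hC⟩ := hK.exists_bound_of_continuousOn hF.continuousOn
  refine ⟨C, fun w hw hw1 => ?_⟩
  obtain ⟨t, rfl⟩ := IsAlgClosed.eval_surjective hp.ne' w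
  rw [← hFH t hw]
  exact hC t (mem_closedBall_zero_iff.2 hw1)

theorem Complex.exists_differentiable_eq_of_bounded_punctured_ball {E : Type*}
    [NormedAddCommGroup E] [NormedSpace ℂ E] [CompleteSpace E] {H : ℂ → E} {c : ℂ}
    (hH : DifferentiableOn ℂ H {c}ᶜ) {C ε : ℝ} (hε : 0 < ε)
    (hb : ∀ w ∈ ball c ε \ {c}, ‖H w‖ ≤ C) :
    ∃ G : ℂ → E, Differentiable ℂ G ∧ ∀ w, w ≠ c → G w = H w := by
  set G := update H c (limUnder (𝓝[≠] c) H)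
  have hGH : ∀ w, w ≠ c → G w = H w := fun w hw => update_of_ne hw _ _
  have hG_ball : DifferentiableOn ℂ G (ball c ε) :=
    differentiableOn_update_limUnder_of_bddAbove (ball_mem_nhds c hε)
      (hH.mono fun _ hw => hw.2) ⟨C, by rintro _ ⟨w, hw, rfl⟩; exact hb w hw⟩
  have hG_compl : DifferentiableOn ℂ G (univ \ {c}) :=
    (hH.mono fun _ hw => hw.2).congr fun w hw => hGH w hw.2
  refine ⟨G, fun z => ?_, hGH⟩
  refine ((differentiableOn_compl_singleton_and_continuousAt_iff univ_mem).1
    ⟨hG_compl, ?_⟩).differentiableAt univ_mem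
  exact (hG_ball.differentiableAt (ball_mem_nhds c hε)).continuousAt

theorem stmt_16_general (d : ℕ) (hd : 0 < d) (H' : ℂ → ℂ)
    (hH' : DifferentiableOn ℂ H' {(0:ℂ)}ᶜ)
    (R : Fin d → Polynomial ℂ) (hR : ∀ j, 0 < (R j).natDegree)
    (f : MvPolynomial (Fin d) ℂ)
    (hf : ∀ x : Fin d → ℂ, (∀ j, (R j).eval (x j) ≠ 0) →
      MvPolynomial.eval x f = H' (∏ j, (R j).eval (x j))) :
    (∃ C : ℝ, ∃ ε > (0:ℝ), ∀ w : ℂ, w ≠ 0 → ‖w‖ < ε →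
        ‖H' w‖ ≤ C) ∧
    ∃ G : ℂ → ℂ, Differentiable ℂ G ∧ ∀ w : ℂ, w ≠ 0 → G w = H' w := by
  set j₀ : Fin d := ⟨0, hd⟩
  choose b hb using fun j => IsAlgClosed.eval_surjective (hR j).ne' (1 : ℂ)
  have hb_ne : ∀ j ≠ j₀, ∀ t, (R j).eval (update b j₀ t j) = 1 := fun j hj t => by
    rw [update_of_ne hj]; exact hb j
  have hprod : ∀ t, ∏ j, (R j).eval (update b j₀ t j) = (R j₀).eval t := fun t =>
    Finset.prod_eq_single j₀ (fun j _ hj => hb_ne j hj t) (by simp)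
  obtain ⟨C, hC⟩ := Polynomial.exists_bound_of_eq_comp_eval (hR j₀) (H := H')
    (F := fun t => MvPolynomial.eval (update b j₀ t) f)
    ((MvPolynomial.continuous_eval f).comp (continuous_const.update j₀ continuous_id))
    fun t ht => by
      refine (hf _ fun j => ?_).trans (congrArg H' (hprod t))
      rcases eq_or_ne j j₀ with rfl | hj
      · simpa using ht
      · simp [hb_ne j hj t]
  refine ⟨⟨C, 1, one_pos, fun w hw hw1 => hC w hw hw1.le⟩, ?_⟩
  exact Complex.exists_differentiable_eq_of_bounded_punctured_ball hH' one_pos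
    fun w hw => hC w hw.2 (mem_ball_zero_iff.1 hw.1).le

/-- If a polynomial `f` equals `H̃(R₁(x₁)·…·R_d(x_d))` off the zero sets of the
nonconstant polynomials `R_j`, where `H̃` is holomorphic on `ℂ \ {0}`, and `R₁` has
a zero, then `H̃` is bounded near `0` and extends to an entire function. -/
theorem stmt_16 (d : ℕ) (hd : 0 < d) (H' : ℂ → ℂ)
    (hH' : DifferentiableOn ℂ H' {(0:ℂ)}ᶜ)
    (R : Fin d → Polynomial ℂ) (hR : ∀ j, 0 < (R j).natDegree)
    (f : MvPolynomial (Fin d) ℂ)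
    (hf : ∀ x : Fin d → ℂ, (∀ j, (R j).eval (x j) ≠ 0) →
      MvPolynomial.eval x f = H' (∏ j, (R j).eval (x j)))
    (a : ℂ) (haz : (R ⟨0, hd⟩).eval a = 0) :
    (∃ C : ℝ, ∃ ε > (0:ℝ), ∀ w : ℂ, w ≠ 0 → ‖w‖ < ε →
        ‖H' w‖ ≤ C) ∧
    ∃ G : ℂ → ℂ, Differentiable ℂ G ∧ ∀ w : ℂ, w ≠ 0 → G w = H' w :=
  stmt_16_general d hd H' hH' R hR f hf
end

section
/- Let H : ℂ → ℂ be entire and let R₁,…,R_d be complex polynomials with at least one R_j nonconstant. If the function (x₁,…,x_d) ↦ H(R₁(x₁)+⋯+R_d(x_d)) is a polynomial in x₁,…,x_d, then H is a polynomial. -/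
/-!
Restricting the polynomial `f` to the line `x = update 0 j₀ t` shows that `H ∘ Q` is a polynomial
`P` for the nonconstant polynomial `Q = R j₀ + const`. Since `Q` is surjective and proper, every
large `z` is `Q t` for some large `t`, with `|t| = O(|Q t|)`; hence `|H z| = |P t| = O(|z| ^ deg P)`.
An entire function of polynomial growth is a polynomial: dividing `H - H 0` by `z` lowers the
growth exponent by one, down to Liouville's theorem.
-/

open Filter Asymptotics Bornology Polynomial

theorem Filter.map_cocompact_eq_of_surjective {X Y : Type*} [TopologicalSpace X]
    [TopologicalSpace Y] {f : X → Y} (hf : Continuous f)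
    (h : Tendsto f (cocompact X) (cocompact Y)) (hs : Function.Surjective f) :
    map f (cocompact X) = cocompact Y := by
  rw [← map_comap_of_surjective hs (cocompact Y),
    le_antisymm (comap_cocompact_le hf) h.le_comap]

section AlgClosed

variable {K : Type*} [NormedField K] [ProperSpace K] [IsAlgClosed K]

theorem Polynomial.map_eval_cobounded {Q : K[X]} (hQ : 0 < Q.natDegree) :
    Filter.map Q.eval (cobounded K) = cobounded K := by
  rw [Metric.cobounded_eq_cocompact]
  refine map_cocompact_eq_of_surjective Q.continuous ?_ (IsAlgClosed.eval_surjective hQ.ne')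
  rw [← Metric.cobounded_eq_cocompact, ← tendsto_norm_atTop_iff_cobounded]
  exact Q.tendsto_norm_atTop (natDegree_pos_iff_degree_pos.mp hQ) tendsto_norm_cobounded_atTop

theorem Polynomial.isBigO_pow_of_comp_eq {H : K → K} {P Q : K[X]} (hQ : 0 < Q.natDegree)
    (hPQ : ∀ t, H (Q.eval t) = P.eval t) : H =O[cobounded K] (· ^ P.natDegree) := by
  rw [← map_eval_cobounded hQ, isBigO_map]
  have hP : P.eval =O[cobounded K] (X ^ P.natDegree : K[X]).eval :=
    isBigO_cobounded_of_degree_le (by simp [degree_le_natDegree])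
  have hX : (X : K[X]).eval =O[cobounded K] Q.eval :=
    isBigO_cobounded_of_degree_le (by
      rw [degree_X, degree_eq_natDegree (ne_zero_of_natDegree_gt hQ)]; exact_mod_cast hQ)
  simp only [eval_pow, eval_X] at hP hX
  simpa [Function.comp_def, hPQ] using hP.trans (hX.pow P.natDegree)

end AlgClosed

theorem isBigO_dslope_zero {𝕜 E : Type*} [NontriviallyNormedField 𝕜] [NormedAddCommGroup E]
    [NormedSpace 𝕜 E] {f : 𝕜 → E} {k : ℕ} (hf : f =O[cobounded 𝕜] (· ^ (k + 1))) : dslope f 0 =O[cobounded 𝕜] (· ^ k) := by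
  have hpow : Tendsto (fun z : 𝕜 => ‖z ^ (k + 1)‖) (cobounded 𝕜) atTop := by
    simpa only [norm_pow, Function.comp_def] using
      (tendsto_pow_atTop (Nat.add_one_ne_zero k)).comp tendsto_norm_cobounded_atTop
  have hconst : (fun _ => f 0) =O[cobounded 𝕜] (· ^ (k + 1)) :=
    (isBigO_const_one ℝ (f 0) _).trans_isLittleO ((isLittleO_one_left_iff ℝ).2 hpow) |>.isBigO
  have hslope : (fun z => z⁻¹ • (f z - f 0)) =O[cobounded 𝕜] fun z => z⁻¹ • z ^ (k + 1) :=
    (isBigO_refl _ _).smul (hf.sub hconst)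
  refine hslope.congr' ?_ ?_ <;> filter_upwards [eventually_ne_cobounded 0] with z hz
  · rw [dslope_of_ne _ hz, slope_def_module, sub_zero]
  · rw [smul_eq_mul, pow_succ', ← mul_assoc, inv_mul_cancel₀ hz, one_mul]

theorem Differentiable.exists_polynomial_of_isBigO_pow {H : ℂ → ℂ} (hH : Differentiable ℂ H)
    {k : ℕ} (hk : H =O[cobounded ℂ] (· ^ k)) : ∃ p : ℂ[X], ∀ z, H z = p.eval z := by
  induction k generalizing H with
  | zero =>
    have hb : IsBounded (Set.range H) := by
      rw [hH.continuous.isBounded_range_iff_isBigO, ← Metric.cobounded_eq_cocompact]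
      exact hk.trans (by simp only [pow_zero]; exact isBigO_const_const (1 : ℂ) one_ne_zero _)
    obtain ⟨c, hc⟩ := hH.exists_eq_const_of_bounded hb
    exact ⟨C c, by simp [hc]⟩
  | succ k ih =>
    have hG : Differentiable ℂ (dslope H 0) := differentiableOn_univ.mp <|
      (Complex.differentiableOn_dslope univ_mem).2 hH.differentiableOn
    obtain ⟨g, hg⟩ := ih hG (isBigO_dslope_zero hk)
    refine ⟨C (H 0) + X * g, fun z => ?_⟩
    have hH_eq := sub_smul_dslope H 0 z
    simp only [sub_zero, smul_eq_mul, hg] at hH_eq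
    simp only [eval_add, eval_C, eval_mul, eval_X, hH_eq]
    ring

theorem MvPolynomial.exists_polynomial_eval_update {R σ : Type*} [CommSemiring R] [DecidableEq σ]
    (f : MvPolynomial σ R) (x : σ → R) (i : σ) :
    ∃ p : R[X], ∀ t, p.eval t = MvPolynomial.eval (Function.update x i t) f := by
  refine ⟨aeval (Function.update (fun j => Polynomial.C (x j)) i Polynomial.X) f, fun t => ?_⟩
  rw [← Polynomial.coe_aeval_eq_eval, comp_aeval_apply, aeval_eq_eval]
  congr
  funext j
  rcases eq_or_ne j i with rfl | hj <;> simp [*]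

open Finset in
/-- If `H` is entire, at least one `R_j` is nonconstant, and
`(x₁,…,x_d) ↦ H(R₁(x₁)+⋯+R_d(x_d))` is a polynomial, then `H` is a polynomial. -/
theorem stmt_17 (d : ℕ) (H : ℂ → ℂ) (hH : Differentiable ℂ H)
    (R : Fin d → Polynomial ℂ) (j₀ : Fin d) (hR : 0 < (R j₀).natDegree)
    (f : MvPolynomial (Fin d) ℂ)
    (hf : ∀ x : Fin d → ℂ,
      MvPolynomial.eval x f = H (∑ j, (R j).eval (x j))) :
    ∃ h : Polynomial ℂ, ∀ z : ℂ, H z = h.eval z := by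
  obtain ⟨P, hP⟩ := f.exists_polynomial_eval_update 0 j₀
  set Q := R j₀ + C (∑ j ∈ univ \ {j₀}, (R j).eval 0)
  have hQ : 0 < Q.natDegree := by rwa [natDegree_add_C]
  have hPQ : ∀ t, H (Q.eval t) = P.eval t := fun t => by
    rw [hP, hf, sum_congr rfl fun j _ => Function.apply_update (fun j => (R j).eval) 0 j₀ t j,
      sum_update_of_mem (mem_univ j₀)]
    simp only [Q, eval_add, eval_C, Pi.zero_apply]
  exact hH.exists_polynomial_of_isBigO_pow (isBigO_pow_of_comp_eq hQ hPQ)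
end

section
/- Let U₁, U₂ ⊆ ℂ be open, f̃ : U₁ → ℂ and Q̃ : U₂ → ℂ holomorphic, and r a function meromorphic on ℂ. Suppose f̃(γ(1)) = Q̃(∫_γ r) for every smooth curve γ : [0,1] → ℂ avoiding the poles of r with γ(1) ∈ U₁ and ∫_γ r ∈ U₂. Then for every such γ, f̃'(γ(1)) = Q̃'(∫_γ r) · r(γ(1)). -/
/-! Put `z₀ = γ 1`. On a disc around `z₀` avoiding `S`, `r` has a primitive `F`. For `z` in the
disc, running through `γ` and then along the segment `[z₀, z]`, both reparametrized by flat ramps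
so that the concatenation stays `C¹`, gives an admissible curve ending at `z` whose integral is
`∫_γ r + F z - F z₀`. So `f̃ = Q̃ ∘ (∫_γ r + F - F z₀)` near `z₀`, and the chain rule together with
`F' z₀ = r z₀` gives the claim. -/

open Set MeasureTheory intervalIntegral
open scoped Topology

lemma deriv_eq_zero_of_eqOn_const {𝕜 F : Type*} [NontriviallyNormedField 𝕜]
    [NormedAddCommGroup F] [NormedSpace 𝕜 F] {f : 𝕜 → F} {s : Set 𝕜} {x : 𝕜} {c : F}
    (hf : DifferentiableAt 𝕜 f x) (hfs : EqOn f (fun _ ↦ c) s) (hx : x ∈ s)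
    (hs : UniqueDiffWithinAt 𝕜 s x) : deriv f x = 0 := by
  rw [← hf.derivWithin hs, derivWithin_congr hfs (hfs hx)]
  simp

noncomputable def ramp (a t : ℝ) : ℝ := Real.smoothTransition (2 * t - a)

section Ramp

variable (a : ℝ) {t : ℝ}

lemma contDiff_ramp {n : ℕ∞} : ContDiff ℝ n (ramp a) :=
  Real.smoothTransition.contDiff.comp ((contDiff_const.mul contDiff_id).sub contDiff_const)

lemma hasDerivAt_ramp (t : ℝ) : HasDerivAt (ramp a) (deriv (ramp a) t) t :=
  ((contDiff_ramp a (n := 1)).differentiable one_ne_zero t).hasDerivAt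

lemma continuous_deriv_ramp : Continuous (deriv (ramp a)) :=
  (contDiff_ramp a (n := 1)).continuous_deriv le_rfl

lemma ramp_mem_Icc (t : ℝ) : ramp a t ∈ Icc (0 : ℝ) 1 :=
  ⟨Real.smoothTransition.nonneg _, Real.smoothTransition.le_one _⟩

variable {a}

lemma ramp_eq_zero (h : 2 * t ≤ a) : ramp a t = 0 :=
  Real.smoothTransition.zero_of_nonpos (by linarith)

lemma ramp_eq_one (h : a + 1 ≤ 2 * t) : ramp a t = 1 :=
  Real.smoothTransition.one_of_one_le (by linarith)

lemma deriv_ramp_eq_zero_of_le (h : 2 * t ≤ a) : deriv (ramp a) t = 0 :=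
  deriv_eq_zero_of_eqOn_const (hasDerivAt_ramp a t).differentiableAt
    (s := Iic (a / 2)) (fun _ hs ↦ ramp_eq_zero (by linarith [mem_Iic.mp hs]))
    (by rw [mem_Iic]; linarith) (uniqueDiffOn_Iic _ t (by rw [mem_Iic]; linarith))

lemma deriv_ramp_eq_zero_of_ge (h : a + 1 ≤ 2 * t) : deriv (ramp a) t = 0 :=
  deriv_eq_zero_of_eqOn_const (hasDerivAt_ramp a t).differentiableAt
    (s := Ici ((a + 1) / 2)) (fun _ hs ↦ ramp_eq_one (by linarith [mem_Ici.mp hs]))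
    (by rw [mem_Ici]; linarith) (uniqueDiffOn_Ici _ t (by rw [mem_Ici]; linarith))

end Ramp

noncomputable def extendBySegment (γ : ℝ → ℂ) (z : ℂ) (t : ℝ) : ℂ :=
  γ (ramp 0 t) + (ramp 1 t : ℂ) * (z - γ 1)

section ExtendBySegment

variable {γ : ℝ → ℂ} {z : ℂ} {t : ℝ}

lemma extendBySegment_of_le_half (ht : t ≤ 1 / 2) :
    extendBySegment γ z t = γ (ramp 0 t) := by
  simp [extendBySegment, ramp_eq_zero (a := 1) (by linarith : 2 * t ≤ 1)]

lemma extendBySegment_of_half_le (ht : 1 / 2 ≤ t) :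
    extendBySegment γ z t = γ 1 + (ramp 1 t : ℂ) * (z - γ 1) := by
  rw [extendBySegment, ramp_eq_one (by linarith)]

lemma extendBySegment_one : extendBySegment γ z 1 = z := by
  rw [extendBySegment_of_half_le (by norm_num), ramp_eq_one (by norm_num)]
  simp

lemma contDiff_extendBySegment (hγ : ContDiff ℝ 1 γ) : ContDiff ℝ 1 (extendBySegment γ z) :=
  (hγ.comp (contDiff_ramp 0)).add
    ((Complex.ofRealCLM.contDiff.comp (contDiff_ramp 1)).mul contDiff_const)

lemma deriv_extendBySegment (hγ : Differentiable ℝ γ) (t : ℝ) :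
    deriv (extendBySegment γ z) t =
      deriv (ramp 0) t • deriv γ (ramp 0 t) + ((deriv (ramp 1) t : ℝ) : ℂ) * (z - γ 1) :=
  (((hγ _).hasDerivAt.scomp t (hasDerivAt_ramp 0 t)).add
    ((hasDerivAt_ramp 1 t).ofReal_comp.mul_const (z - γ 1))).deriv

lemma extendBySegment_mem_segment (ht : 1 / 2 ≤ t) :
    extendBySegment γ z t ∈ segment ℝ (γ 1) z := by
  rw [extendBySegment_of_half_le ht, segment_eq_image']
  exact ⟨ramp 1 t, ramp_mem_Icc 1 t, by simp [Complex.real_smul]⟩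

lemma mapsTo_extendBySegment {U : Set ℂ} (hγU : MapsTo γ (Icc 0 1) U)
    (hsegU : segment ℝ (γ 1) z ⊆ U) : MapsTo (extendBySegment γ z) (Icc 0 1) U := by
  intro t _
  rcases le_total t (1 / 2) with ht | ht
  · rw [extendBySegment_of_le_half ht]
    exact hγU (ramp_mem_Icc 0 t)
  · exact hsegU (extendBySegment_mem_segment ht)

end ExtendBySegment

section LineIntegral

variable {r : ℂ → ℂ} {U : Set ℂ} {Γ : ℝ → ℂ} {a b : ℝ}

lemma ContinuousOn.intervalIntegrable_comp_mul_deriv (hr : ContinuousOn r U)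
    (hΓ : ContDiff ℝ 1 Γ) (hΓU : MapsTo Γ (uIcc a b) U) :
    IntervalIntegrable (fun t ↦ r (Γ t) * deriv Γ t) volume a b :=
  ((hr.comp hΓ.continuous.continuousOn hΓU).mul
    (hΓ.continuous_deriv le_rfl).continuousOn).intervalIntegrable

lemma integral_comp_mul_deriv_eq_sub {F : ℂ → ℂ} (hF : ∀ w ∈ U, HasDerivAt F (r w) w)
    (hr : ContinuousOn r U) (hΓ : ContDiff ℝ 1 Γ) (hΓU : MapsTo Γ (uIcc a b) U) :
    ∫ t in a..b, r (Γ t) * deriv Γ t = F (Γ b) - F (Γ a) :=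
  integral_eq_sub_of_hasDerivAt
    (fun t ht ↦ (hF _ (hΓU ht)).comp t ((hΓ.differentiable one_ne_zero t).hasDerivAt))
    (hr.intervalIntegrable_comp_mul_deriv hΓ hΓU)

variable {γ : ℝ → ℂ} {z : ℂ}

lemma integral_extendBySegment_left (hr : ContinuousOn r U) (hγ : ContDiff ℝ 1 γ)
    (hγU : MapsTo γ (Icc 0 1) U) :
    ∫ t in (0 : ℝ)..1 / 2, r (extendBySegment γ z t) * deriv (extendBySegment γ z) t =
      ∫ t in (0 : ℝ)..1, r (γ t) * deriv γ t := by
  have hhalf : uIcc (0 : ℝ) (1 / 2) = Icc 0 (1 / 2) := uIcc_of_le (by norm_num)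
  have hreparam : EqOn (fun t ↦ r (extendBySegment γ z t) * deriv (extendBySegment γ z) t)
      (fun t ↦ deriv (ramp 0) t • ((fun u ↦ r (γ u) * deriv γ u) ∘ ramp 0) t)
      (uIcc 0 (1 / 2)) := by
    intro t ht
    rw [hhalf] at ht
    simp only [Function.comp_apply, deriv_extendBySegment (hγ.differentiable one_ne_zero),
      deriv_ramp_eq_zero_of_le (a := 1) (by linarith [ht.2] : 2 * t ≤ 1),
      extendBySegment_of_le_half ht.2, Complex.ofReal_zero, zero_mul, add_zero,
      Complex.real_smul]
    ring
  rw [integral_congr hreparam, integral_deriv_smul_comp''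
    (contDiff_ramp 0 (n := 1)).continuous.continuousOn
    (fun t _ ↦ (hasDerivAt_ramp 0 t).hasDerivWithinAt) (continuous_deriv_ramp 0).continuousOn,
    ramp_eq_zero (by norm_num), ramp_eq_one (by norm_num)]
  exact ((hr.comp hγ.continuous.continuousOn hγU).mul
    (hγ.continuous_deriv le_rfl).continuousOn).mono
    (image_subset_iff.mpr fun t _ ↦ ramp_mem_Icc 0 t)

lemma integral_extendBySegment_right {F : ℂ → ℂ}
    (hF : ∀ w ∈ segment ℝ (γ 1) z, HasDerivAt F (r w) w)
    (hr : ContinuousOn r (segment ℝ (γ 1) z)) (hγ : ContDiff ℝ 1 γ) :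
    ∫ t in (1 / 2 : ℝ)..1, r (extendBySegment γ z t) * deriv (extendBySegment γ z) t =
      F z - F (γ 1) := by
  have hmaps : MapsTo (extendBySegment γ z) (uIcc (1 / 2) 1) (segment ℝ (γ 1) z) := by
    intro t ht
    rw [uIcc_of_le (by norm_num)] at ht
    exact extendBySegment_mem_segment ht.1
  rw [integral_comp_mul_deriv_eq_sub hF hr (contDiff_extendBySegment hγ) hmaps,
    extendBySegment_one, extendBySegment_of_half_le le_rfl, ramp_eq_zero (by norm_num)]
  simp

lemma integral_extendBySegment {F : ℂ → ℂ} (hr : ContinuousOn r U) (hγ : ContDiff ℝ 1 γ)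
    (hγU : MapsTo γ (Icc 0 1) U) (hsegU : segment ℝ (γ 1) z ⊆ U)
    (hF : ∀ w ∈ segment ℝ (γ 1) z, HasDerivAt F (r w) w) :
    ∫ t in (0 : ℝ)..1, r (extendBySegment γ z t) * deriv (extendBySegment γ z) t =
      (∫ t in (0 : ℝ)..1, r (γ t) * deriv γ t) + (F z - F (γ 1)) := by
  have hmaps := mapsTo_extendBySegment hγU hsegU
  have hint (a b : ℝ) (ha : a ∈ Icc (0 : ℝ) 1) (hb : b ∈ Icc (0 : ℝ) 1) :
      IntervalIntegrable (fun t ↦ r (extendBySegment γ z t) * deriv (extendBySegment γ z) t)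
        volume a b :=
    hr.intervalIntegrable_comp_mul_deriv (contDiff_extendBySegment hγ)
      (hmaps.mono_left (uIcc_subset_Icc ha hb))
  rw [← integral_add_adjacent_intervals (hint 0 (1 / 2) (by norm_num) (by norm_num))
    (hint (1 / 2) 1 (by norm_num) (by norm_num)),
    integral_extendBySegment_left hr hγ hγU, integral_extendBySegment_right hF (hr.mono hsegU) hγ]

end LineIntegral

theorem stmt_19_general (U₁ U₂ : Set ℂ) (hU₁ : IsOpen U₁) (hU₂ : IsOpen U₂)
    (ftilde Qtilde : ℂ → ℂ)
    (hQt : DifferentiableOn ℂ Qtilde U₂)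
    (r : ℂ → ℂ) (S : Set ℂ) (hS : IsClosed S) (hr : DifferentiableOn ℂ r Sᶜ)
    (h : ∀ γ : ℝ → ℂ, ContDiff ℝ 1 γ → (∀ t ∈ Set.Icc (0:ℝ) 1, γ t ∉ S) →
      γ 1 ∈ U₁ → (∫ t in (0:ℝ)..1, r (γ t) * deriv γ t) ∈ U₂ →
      ftilde (γ 1) = Qtilde (∫ t in (0:ℝ)..1, r (γ t) * deriv γ t)) :
    ∀ γ : ℝ → ℂ, ContDiff ℝ 1 γ → (∀ t ∈ Set.Icc (0:ℝ) 1, γ t ∉ S) →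
      γ 1 ∈ U₁ → (∫ t in (0:ℝ)..1, r (γ t) * deriv γ t) ∈ U₂ →
      deriv ftilde (γ 1) =
        deriv Qtilde (∫ t in (0:ℝ)..1, r (γ t) * deriv γ t) * r (γ 1) := by
  intro γ hγ hγS hγ1 hw₀
  set w₀ := ∫ t in (0:ℝ)..1, r (γ t) * deriv γ t
  have hγU : MapsTo γ (Icc 0 1) Sᶜ := hγS
  obtain ⟨ε, hε, hball⟩ :=
    Metric.isOpen_iff.mp hS.isOpen_compl (γ 1) (hγU (right_mem_Icc.mpr zero_le_one))
  obtain ⟨F, hF⟩ := (hr.mono hball).isExactOn_ball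
  set g : ℂ → ℂ := fun z ↦ w₀ + (F z - F (γ 1))
  have hg : HasDerivAt g (r (γ 1)) (γ 1) :=
    ((hF _ (Metric.mem_ball_self hε)).sub_const _).const_add w₀
  have hgγ : g (γ 1) = w₀ := by simp [g]
  have hQ : HasDerivAt Qtilde (deriv Qtilde (g (γ 1))) (g (γ 1)) :=
    hgγ ▸ (hQt.differentiableAt (hU₂.mem_nhds hw₀)).hasDerivAt
  have hlocal : ftilde =ᶠ[𝓝 (γ 1)] Qtilde ∘ g := by
    filter_upwards [hU₁.mem_nhds hγ1, Metric.ball_mem_nhds _ hε,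
      hg.continuousAt.preimage_mem_nhds (hU₂.mem_nhds (hgγ ▸ hw₀))] with z hzU₁ hzB hzU₂
    have hseg := (convex_ball _ _).segment_subset (Metric.mem_ball_self hε) hzB
    have hΓ := integral_extendBySegment hr.continuousOn hγ hγU (hseg.trans hball)
      (fun w hw ↦ hF w (hseg hw))
    have hfz := h (extendBySegment γ z) (contDiff_extendBySegment hγ)
      (mapsTo_extendBySegment hγU (hseg.trans hball)) (by rwa [extendBySegment_one])
      (by rwa [hΓ])
    rwa [extendBySegment_one, hΓ] at hfz
  rw [hlocal.deriv_eq, (hQ.comp _ hg).deriv, hgγ]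

/-- Chain rule along curves: if `f̃(γ(1)) = Q̃(∫_γ r)` for every smooth curve `γ`
starting anywhere, avoiding the poles `S` of the meromorphic function `r`, with
`γ(1) ∈ U₁` and `∫_γ r ∈ U₂`, then `f̃'(γ(1)) = Q̃'(∫_γ r)·r(γ(1))` for every such
curve. -/
theorem stmt_19 (U₁ U₂ : Set ℂ) (hU₁ : IsOpen U₁) (hU₂ : IsOpen U₂)
    (ftilde Qtilde : ℂ → ℂ)
    (hft : DifferentiableOn ℂ ftilde U₁) (hQt : DifferentiableOn ℂ Qtilde U₂)
    (r : ℂ → ℂ) (S : Set ℂ) (hS : IsClosed S) (hr : DifferentiableOn ℂ r Sᶜ)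
    (h : ∀ γ : ℝ → ℂ, ContDiff ℝ 1 γ → (∀ t ∈ Set.Icc (0:ℝ) 1, γ t ∉ S) →
      γ 1 ∈ U₁ → (∫ t in (0:ℝ)..1, r (γ t) * deriv γ t) ∈ U₂ →
      ftilde (γ 1) = Qtilde (∫ t in (0:ℝ)..1, r (γ t) * deriv γ t)) :
    ∀ γ : ℝ → ℂ, ContDiff ℝ 1 γ → (∀ t ∈ Set.Icc (0:ℝ) 1, γ t ∉ S) →
      γ 1 ∈ U₁ → (∫ t in (0:ℝ)..1, r (γ t) * deriv γ t) ∈ U₂ →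
      deriv ftilde (γ 1) =
        deriv Qtilde (∫ t in (0:ℝ)..1, r (γ t) * deriv γ t) * r (γ 1) :=
  stmt_19_general U₁ U₂ hU₁ hU₂ ftilde Qtilde hQt r S hS hr h
end
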